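/- Let 0 < λ ≤ 1, |φ| < 1 with |φ(1−λ)| < 1, and let x_t be a stationary AR(1) process x_t = φ x_{t-1} + ν_t with ν_t i.i.d. mean 0 and variance σ². Define the EWMA z_t = λ x_t + (1−λ) z_{t-1}. Then the asymptotic variance of z_t is lim_{t→∞} Var(z_t) = σ²λ(1 + φ(1−λ)) / ((1−φ²)(2−λ)(1−φ(1−λ))). -/

import Mathlib

open MeasureTheory Filter

/-- If `u (t+1) = a * u t + c t` with `|a| < 1` and `c → b`, then `u → b / (1 - a)`. -/
lemma lin_rec_tendsto {a b : ℝ} (ha : |a| < 1) {u c : ℕ → ℝ}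
    (hc : Tendsto c atTop (nhds b)) (hu : ∀ t, u (t + 1) = a * u t + c t) :
    Tendsto u atTop (nhds (b / (1 - a))) := by
  have haa := abs_lt.mp ha
  have ha1 : (1 : ℝ) - a ≠ 0 := by linarith [haa.2]
  set L := b / (1 - a) with hL
  have hLe : a * L + b = L := by rw [hL]; field_simp; ring
  rw [Metric.tendsto_atTop] at hc ⊢
  intro ε hε
  have habs : 0 < 1 - |a| := by linarith
  obtain ⟨N, hN⟩ := hc (ε * (1 - |a|) / 4) (by positivity)
  have claim : ∀ m, |u (N + m) - L| ≤ |a| ^ m * |u N - L| + ε / 2 := by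
    intro m
    induction m with
    | zero => simp; linarith
    | succ m ih =>
      have h1 : u (N + m + 1) - L = a * (u (N + m) - L) + (c (N + m) - b) := by
        rw [hu]; linarith [hLe]
    
      have hcb : |c (N + m) - b| ≤ ε * (1 - |a|) / 4 := by
        have := hN (N + m) (Nat.le_add_right _ _)
        rw [Real.dist_eq] at this; linarith
      calc |u (N + (m + 1)) - L| = |a * (u (N + m) - L) + (c (N + m) - b)| := by
              rw [show N + (m + 1) = (N + m) + 1 by omega, h1]
        _ ≤ |a| * |u (N + m) - L| + |c (N + m) - b| := by
              calc _ ≤ |a * (u (N + m) - L)| + |c (N + m) - b| := abs_add_le _ _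
                _ = _ := by rw [abs_mul]
        _ ≤ |a| * (|a| ^ m * |u N - L| + ε / 2) + ε * (1 - |a|) / 4 := by
              gcongr
        _ ≤ |a| ^ (m + 1) * |u N - L| + ε / 2 := by
              rw [pow_succ]
              nlinarith [abs_nonneg a, pow_nonneg (abs_nonneg a) m,
                abs_nonneg (u N - L), hε]
  have hpow : Tendsto (fun m => |a| ^ m * |u N - L|) atTop (nhds 0) := by
    simpa using (tendsto_pow_atTop_nhds_zero_of_lt_one (abs_nonneg a) ha).mul_const |u N - L|
  rw [Metric.tendsto_atTop] at hpow
  obtain ⟨M, hM⟩ := hpow (ε / 4) (by positivity)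
  refine ⟨N + M, fun t ht => ?_⟩
  have h2 : M ≤ t - N := by omega
  have h3 : |a| ^ (t - N) * |u N - L| < ε / 4 := by
    have h4 := hM (t - N) h2
    rw [Real.dist_eq, sub_zero, abs_of_nonneg (by positivity)] at h4
    exact h4
  have h5 := claim (t - N)
  rw [show N + (t - N) = t by omega] at h5
  rw [Real.dist_eq]
  linarith

theorem stmt_14 {Ω : Type*} [MeasurableSpace Ω] (μ : Measure Ω) [IsProbabilityMeasure μ]
    (l φ σ : ℝ) (hl0 : 0 < l) (hl1 : l ≤ 1) (hφ : |φ| < 1) (hφl : |φ * (1 - l)| < 1)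
    (hσ : 0 < σ)
    (x z : ℕ → Ω → ℝ)
    (hint : ∀ s t : ℕ, Integrable (fun ω => x s ω * x t ω) μ)
    (hmean : ∀ t : ℕ, ∫ ω, x t ω ∂μ = 0)
    (hcov : ∀ s t : ℕ, ∫ ω, x s ω * x t ω ∂μ = φ ^ (Nat.dist s t) * σ ^ 2 / (1 - φ ^ 2))
    (hz0 : ∀ ω, z 0 ω = l * x 0 ω)
    (hzrec : ∀ t : ℕ, ∀ ω, z (t + 1) ω = l * x (t + 1) ω + (1 - l) * z t ω) :
    Tendsto (fun t : ℕ => ∫ ω, (z t ω) ^ 2 ∂μ) atTop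
      (nhds (σ ^ 2 * l * (1 + φ * (1 - l)) /
        ((1 - φ ^ 2) * (2 - l) * (1 - φ * (1 - l))))) := by
  set γ : ℝ := σ ^ 2 / (1 - φ ^ 2) with hγ
  set r : ℝ := φ * (1 - l) with hrdef
  -- z as an explicit finite sum
  have hzsum : ∀ t ω, z t ω = ∑ i ∈ Finset.range (t + 1), (l * (1 - l) ^ (t - i)) * x i ω := by
    intro t
    induction t with
    | zero => intro ω; simp [hz0]
    | succ t ih =>
      intro ω
      rw [hzrec, Finset.sum_range_succ, ih]
      rw [Finset.mul_sum]
      have hcg : ∀ i ∈ Finset.range (t + 1),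
          (1 - l) * ((l * (1 - l) ^ (t - i)) * x i ω) = (l * (1 - l) ^ (t + 1 - i)) * x i ω := by
        intro i hi
        have hi' : i ≤ t := Nat.lt_succ_iff.mp (Finset.mem_range.mp hi)
        rw [show t + 1 - i = (t - i) + 1 by omega, pow_succ]
        ring
      rw [Finset.sum_congr rfl hcg]
      simp
      ring
  -- rewrite products with z as finite sums
  have hprod : ∀ s t, (fun ω => x s ω * z t ω)
      = fun ω => ∑ i ∈ Finset.range (t + 1), (l * (1 - l) ^ (t - i)) * (x s ω * x i ω) := by
    intro s t
    funext ω
    rw [hzsum, Finset.mul_sum]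
    exact Finset.sum_congr rfl fun i _ => by ring
  have hzx_int : ∀ s t, Integrable (fun ω => x s ω * z t ω) μ := by
    intro s t
    rw [hprod]
    exact integrable_finset_sum _ fun i _ => (hint s i).const_mul _
  have hzz_int : ∀ t, Integrable (fun ω => z t ω * z t ω) μ := by
    intro t
    have : (fun ω => z t ω * z t ω)
        = fun ω => ∑ i ∈ Finset.range (t + 1), (l * (1 - l) ^ (t - i)) * (x i ω * z t ω) := by
      funext ω
      nth_rewrite 1 [hzsum t ω]
      rw [Finset.sum_mul]
      exact Finset.sum_congr rfl fun i _ => by ring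
    rw [this]
    exact integrable_finset_sum _ fun i _ => (hzx_int i t).const_mul _
  have key : ∀ s t, ∫ ω, x s ω * z t ω ∂μ
      = ∑ i ∈ Finset.range (t + 1), (l * (1 - l) ^ (t - i)) * (φ ^ (Nat.dist s i) * σ ^ 2 / (1 - φ ^ 2)) := by
    intro s t
    rw [hprod, integral_finset_sum _ fun i _ => (hint s i).const_mul _]
    exact Finset.sum_congr rfl fun i _ => by rw [integral_const_mul, hcov]
  -- cross term identity
  have hS : ∀ t, ∫ ω, x (t + 1) ω * z t ω ∂μ = φ * ∫ ω, x t ω * z t ω ∂μ := by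
    intro t
    rw [key, key, Finset.mul_sum]
    refine Finset.sum_congr rfl fun i hi => ?_
    have hi' : i ≤ t := Nat.lt_succ_iff.mp (Finset.mem_range.mp hi)
    have hd : Nat.dist (t + 1) i = Nat.dist t i + 1 := by simp [Nat.dist]; omega
    rw [hd, pow_succ]
    ring
  -- A recursion
  set A : ℕ → ℝ := fun t => ∫ ω, x t ω * z t ω ∂μ with hA
  have hA_rec : ∀ t, A (t + 1) = r * A t + l * γ := by
    intro t
    have he : (fun ω => x (t + 1) ω * z (t + 1) ω)
        = fun ω => l * (x (t + 1) ω * x (t + 1) ω) + (1 - l) * (x (t + 1) ω * z t ω) := by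
      funext ω; rw [hzrec]; ring
    show (∫ ω, x (t + 1) ω * z (t + 1) ω ∂μ) = _
    rw [he, integral_add ((hint _ _).const_mul _) ((hzx_int _ _).const_mul _),
      integral_const_mul, integral_const_mul, hcov, hS, Nat.dist_self, pow_zero, hγ, hrdef]
    ring
  have hAlim : Tendsto A atTop (nhds (l * γ / (1 - r))) :=
    lin_rec_tendsto hφl tendsto_const_nhds hA_rec
  -- V recursion
  set V : ℕ → ℝ := fun t => ∫ ω, (z t ω) ^ 2 ∂μ with hV
  have hVrec : ∀ t, V (t + 1) = (1 - l) ^ 2 * V t + (l ^ 2 * γ + 2 * l * (1 - l) * φ * A t) := by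
    intro t
    have he : (fun ω => (z (t + 1) ω) ^ 2)
        = fun ω => (l ^ 2 * (x (t + 1) ω * x (t + 1) ω)
            + (2 * l * (1 - l)) * (x (t + 1) ω * z t ω)) + (1 - l) ^ 2 * (z t ω * z t ω) := by
      funext ω; rw [hzrec]; ring
    have he2 : (fun ω => (z t ω) ^ 2) = fun ω => z t ω * z t ω := by
      funext ω; ring
    have i1 : Integrable (fun ω => l ^ 2 * (x (t + 1) ω * x (t + 1) ω)
        + (2 * l * (1 - l)) * (x (t + 1) ω * z t ω)) μ :=
      ((hint _ _).const_mul _).add ((hzx_int _ _).const_mul _)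
    show (∫ ω, (z (t + 1) ω) ^ 2 ∂μ) = _
    rw [he, integral_add i1 ((hzz_int _).const_mul _),
      integral_add ((hint _ _).const_mul _) ((hzx_int _ _).const_mul _),
      integral_const_mul, integral_const_mul, integral_const_mul, hcov, hS, Nat.dist_self, pow_zero]
    have : V t = ∫ ω, z t ω * z t ω ∂μ := by rw [hV]; simp only [← he2]
    rw [← this, hγ]
    ring
  have ha2 : |(1 - l) ^ 2| < 1 := by
    rw [abs_of_nonneg (sq_nonneg _)]
    nlinarith
  have hblim : Tendsto (fun t => l ^ 2 * γ + 2 * l * (1 - l) * φ * A t) atTop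
      (nhds (l ^ 2 * γ + 2 * l * (1 - l) * φ * (l * γ / (1 - r)))) :=
    tendsto_const_nhds.add (hAlim.const_mul _)
  have hVlim := lin_rec_tendsto ha2 hblim hVrec
  convert hVlim using 2
  -- algebraic identity for the limit
  have haa := abs_lt.mp hφ
  have hra := abs_lt.mp hφl
  have hφ2 : (1 : ℝ) - φ ^ 2 ≠ 0 := by nlinarith
  have hr1 : (1 : ℝ) - r ≠ 0 := by rw [hrdef]; intro h; rw [hrdef] at hra; linarith [hra.2]
  have h2l : (2 : ℝ) - l ≠ 0 := by linarith
  have hden : (1 : ℝ) - (1 - l) ^ 2 ≠ 0 := by nlinarith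
  rw [hγ, hrdef]
  rw [hrdef] at hr1
  field_simp
  ring
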